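/- arXiv:0904.2479 — 3 statements merged into one kernel-verified Lean document; each statement's English description precedes it below -/
import Mathlib

section
/- If P is a finite maximal prefix code in BA* (i.e., a maximal set of words in BA* none of which is a prefix of another), where |A| = k and |B| = s, then |P| = s + (k-1)i for some integer i ≥ 0. Conversely, for every integer i ≥ 0 there exists a finite maximal prefix code in BA* of cardinality s + (k-1)i. -/
/-- A prefix code in BA*: a set of words bw (b ∈ B, w ∈ A*), none of which is a
prefix of another (words with different B-letters are never prefixes of one another). -/
def IsPrefixCodeBA {A B : Type*} (P : Set (B × List A)) : Prop :=
  ∀ p ∈ P, ∀ q ∈ P, p.1 = q.1 → p.2 <+: q.2 → p = q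

/-- A maximal prefix code in BA*: not strictly contained in another prefix code of BA*. -/
def IsMaximalPrefixCodeBA {A B : Type*} (P : Set (B × List A)) : Prop :=
  IsPrefixCodeBA P ∧ ∀ Q : Set (B × List A), IsPrefixCodeBA Q → P ⊆ Q → P = Q


/-!
Split a maximal prefix code of `BA*` along its first letter `b ∈ B`: each fibre is a finite
prefix-free set of words over `A` meeting every word as a prefix or an extension, i.e. the
leaves of a complete `k`-ary tree. Unless that tree is the single root, it is obtained by
grafting such trees below the `k` letters, so its number of leaves is `1 + (k - 1) i` by induction
on height. Summing over the `s` fibres gives `s + (k - 1) i`; conversely, repeatedly grafting a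
tree below one letter and bare leaves below the others produces every such size.
-/

open Finset

namespace PrefixCode

section Fibers

variable {B X : Type*} [Fintype B]

def ofFibers (F : B → Finset X) : Finset (B × X) :=
  (univ.sigma F).map (Equiv.sigmaEquivProd B X).toEmbedding

@[simp]
lemma mem_ofFibers {F : B → Finset X} {p : B × X} : p ∈ ofFibers F ↔ p.2 ∈ F p.1 := by
  simp [ofFibers]

lemma card_ofFibers (F : B → Finset X) : (ofFibers F).card = ∑ b, (F b).card := by
  rw [ofFibers, card_map, card_sigma]

lemma sum_one_add_mul (c : ℕ) (f : B → ℕ) : ∑ b, (1 + c * f b) = Fintype.card B + c * ∑ b, f b := by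
  simp [sum_add_distrib, mul_sum]

lemma card_ofFibers_update_singleton [DecidableEq B] (b₀ : B) (S : Finset X) (x : X) :
    (ofFibers (Function.update (fun _ => {x}) b₀ S)).card = S.card + (Fintype.card B - 1) := by
  rw [card_ofFibers, Fintype.sum_eq_add_sum_compl b₀, Function.update_self,
    sum_congr rfl fun b hb => by rw [Function.update_of_ne (mem_compl.1 hb ∘ mem_singleton.2)]]
  simp [card_compl]

noncomputable def fiber (P : Finset (B × X)) (b : B) : Finset X :=
  P.preimage (Prod.mk b) (Prod.mk_right_injective b).injOn

lemma ofFibers_fiber (P : Finset (B × X)) : ofFibers (fiber P) = P := by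
  ext ⟨b, x⟩
  simp [fiber]

end Fibers

section Words

variable {A : Type*}

def IsPrefixFree (S : Finset (List A)) : Prop :=
  ∀ p ∈ S, ∀ q ∈ S, p <+: q → p = q

def IsPrefixComplete (S : Finset (List A)) : Prop :=
  ∀ v : List A, ∃ p ∈ S, p <+: v ∨ v <+: p

lemma eq_singleton_nil_of_nil_mem {S : Finset (List A)} (hS : IsPrefixFree S) (hnil : [] ∈ S) :
    S = {[]} :=
  eq_singleton_iff_unique_mem.2 ⟨hnil, fun w hw => (hS [] hnil w hw List.nil_prefix).symm⟩

lemma isPrefixFree_singleton (w : List A) : IsPrefixFree ({w} : Finset (List A)) :=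
  fun _ hp _ hq _ => (mem_singleton.1 hp).trans (mem_singleton.1 hq).symm

lemma isPrefixComplete_singleton_nil : IsPrefixComplete ({[]} : Finset (List A)) :=
  fun _ => ⟨[], mem_singleton_self _, Or.inl List.nil_prefix⟩

lemma isPrefixFree_and_isPrefixComplete_update {ι : Type*} [DecidableEq ι] {S : Finset (List A)}
    (hfree : IsPrefixFree S) (hcomp : IsPrefixComplete S) (i₀ : ι) (i : ι) :
    IsPrefixFree (Function.update (fun _ => ({[]} : Finset (List A))) i₀ S i) ∧
      IsPrefixComplete (Function.update (fun _ => ({[]} : Finset (List A))) i₀ S i) := by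
  rcases eq_or_ne i i₀ with rfl | hi
  · simpa using ⟨hfree, hcomp⟩
  · simpa [hi] using ⟨isPrefixFree_singleton [], isPrefixComplete_singleton_nil⟩

def consEmbedding : A × List A ↪ List A :=
  ⟨fun p => p.1 :: p.2, fun _ _ h => Prod.ext (List.cons_eq_cons.1 h).1 (List.cons_eq_cons.1 h).2⟩

@[simp]
lemma consEmbedding_apply (p : A × List A) : consEmbedding p = p.1 :: p.2 := rfl

variable [Fintype A]

def graft (R : A → Finset (List A)) : Finset (List A) :=
  (ofFibers R).map consEmbedding

variable {R : A → Finset (List A)}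

@[simp]
lemma cons_mem_graft {a : A} {w : List A} : a :: w ∈ graft R ↔ w ∈ R a := by
  simp [graft]

@[simp]
lemma nil_notMem_graft : [] ∉ graft R := by
  simp [graft]

lemma card_graft (R : A → Finset (List A)) : (graft R).card = ∑ a, (R a).card := by
  rw [graft, card_map, card_ofFibers]

lemma exists_eq_graft {S : Finset (List A)} (hnil : [] ∉ S) : ∃ R, S = graft R :=
  ⟨fun a => S.preimage (List.cons a) List.cons_injective.injOn, by
    ext (_ | ⟨a, w⟩) <;> simp [hnil]⟩

lemma isPrefixFree_graft_iff : IsPrefixFree (graft R) ↔ ∀ a, IsPrefixFree (R a) := by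
  constructor
  · intro h a p hp q hq hpq
    exact List.cons_injective (h _ (cons_mem_graft.2 hp) _ (cons_mem_graft.2 hq)
      (List.cons_prefix_cons.2 ⟨rfl, hpq⟩))
  · rintro h (_ | ⟨a, p⟩) hp q hq hpq
    · exact absurd hp nil_notMem_graft
    rcases q with _ | ⟨b, q⟩
    · exact absurd hq nil_notMem_graft
    obtain ⟨rfl, hpq'⟩ := List.cons_prefix_cons.1 hpq
    rw [h a p (cons_mem_graft.1 hp) q (cons_mem_graft.1 hq) hpq']

lemma IsPrefixComplete.of_graft (h : IsPrefixComplete (graft R)) (a : A) :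
    IsPrefixComplete (R a) := by
  intro v
  obtain ⟨_ | ⟨c, p⟩, hp, hcomp⟩ := h (a :: v)
  · exact absurd hp nil_notMem_graft
  · simp only [List.cons_prefix_cons] at hcomp
    obtain ⟨rfl, hpv⟩ | ⟨rfl, hvp⟩ := hcomp
    · exact ⟨p, cons_mem_graft.1 hp, Or.inl hpv⟩
    · exact ⟨p, cons_mem_graft.1 hp, Or.inr hvp⟩

lemma isPrefixComplete_graft [Nonempty A] (h : ∀ a, IsPrefixComplete (R a)) :
    IsPrefixComplete (graft R) := by
  rintro (_ | ⟨a, v⟩)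
  · obtain ⟨a⟩ := ‹Nonempty A›
    obtain ⟨p, hp, -⟩ := h a []
    exact ⟨a :: p, cons_mem_graft.2 hp, Or.inr List.nil_prefix⟩
  · obtain ⟨p, hp, hcomp⟩ := h a v
    refine ⟨a :: p, cons_mem_graft.2 hp, ?_⟩
    simpa only [List.cons_prefix_cons, true_and] using hcomp

theorem exists_card_eq_of_isPrefixComplete {S : Finset (List A)} (hfree : IsPrefixFree S)
    (hcomp : IsPrefixComplete S) : ∃ i, S.card = 1 + (Fintype.card A - 1) * i := by
  obtain ⟨n, hn⟩ : ∃ n, ∀ w ∈ S, w.length < n :=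
    ⟨S.sup List.length + 1, fun w hw => Nat.lt_succ_of_le (le_sup (f := List.length) hw)⟩
  induction n generalizing S with
  | zero =>
    obtain ⟨w, hw, -⟩ := hcomp []
    exact absurd (hn w hw) (Nat.not_lt_zero _)
  | succ n ih =>
    by_cases hnil : [] ∈ S
    · exact ⟨0, by rw [eq_singleton_nil_of_nil_mem hfree hnil]; rfl⟩
    obtain ⟨R, rfl⟩ := exists_eq_graft hnil
    have hsub (a : A) : ∃ i, (R a).card = 1 + (Fintype.card A - 1) * i :=
      ih (isPrefixFree_graft_iff.1 hfree a) (hcomp.of_graft a)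
        fun w hw => Nat.lt_of_succ_lt_succ (hn _ (cons_mem_graft.2 hw))
    choose i hi using hsub
    have hA : 0 < Fintype.card A := by
      obtain ⟨_ | ⟨a, _⟩, hp, -⟩ := hcomp []
      · exact absurd hp nil_notMem_graft
      · exact Fintype.card_pos_iff.2 ⟨a⟩
    refine ⟨1 + ∑ a, i a, ?_⟩
    rw [card_graft, sum_congr rfl fun a _ => hi a, sum_one_add_mul, mul_add, mul_one, ← add_assoc,
      Nat.add_sub_cancel' hA]

theorem exists_isPrefixComplete_card_eq [Nonempty A] (i : ℕ) :
    ∃ S : Finset (List A), IsPrefixFree S ∧ IsPrefixComplete S ∧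
      S.card = 1 + (Fintype.card A - 1) * i := by
  classical
  induction i with
  | zero => exact ⟨{[]}, isPrefixFree_singleton [], isPrefixComplete_singleton_nil, rfl⟩
  | succ i ih =>
    obtain ⟨S, hfree, hcomp, hcard⟩ := ih
    obtain ⟨a⟩ := ‹Nonempty A›
    have hR := isPrefixFree_and_isPrefixComplete_update hfree hcomp a
    refine ⟨graft (Function.update (fun _ => {[]}) a S),
      isPrefixFree_graft_iff.2 fun b => (hR b).1, isPrefixComplete_graft fun b => (hR b).2, ?_⟩
    rw [graft, card_map, card_ofFibers_update_singleton, hcard]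
    ring

end Words

section Codes

variable {A B : Type*}

lemma isMaximalPrefixCodeBA_iff (P : Set (B × List A)) :
    IsMaximalPrefixCodeBA P ↔ IsPrefixCodeBA P ∧
      ∀ (b : B) (v : List A), ∃ p ∈ P, p.1 = b ∧ (p.2 <+: v ∨ v <+: p.2) := by
  constructor
  · rintro ⟨hcode, hmax⟩
    refine ⟨hcode, fun b v => ?_⟩
    by_contra! hcon
    have hext : IsPrefixCodeBA (insert (b, v) P) := by
      rintro p (rfl | hp) q (rfl | hq) hpq hpre
      · rfl
      · exact absurd hpre (hcon q hq hpq.symm).2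
      · exact absurd hpre (hcon p hp hpq).1
      · exact hcode p hp q hq hpq hpre
    have hvP : (b, v) ∈ P := (hmax _ hext (Set.subset_insert _ _)).symm ▸ Set.mem_insert _ _
    exact (hcon _ hvP rfl).1 List.prefix_rfl
  · rintro ⟨hcode, hcomp⟩
    refine ⟨hcode, fun Q hQ hPQ => hPQ.antisymm fun q hq => ?_⟩
    obtain ⟨p, hp, hpq, hpre | hpre⟩ := hcomp q.1 q.2
    · exact hQ p (hPQ hp) q hq hpq hpre ▸ hp
    · exact (hQ q hq p (hPQ hp) hpq.symm hpre).symm ▸ hp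

lemma isMaximalPrefixCodeBA_ofFibers_iff [Fintype B] (F : B → Finset (List A)) :
    IsMaximalPrefixCodeBA (↑(ofFibers F) : Set (B × List A)) ↔
      ∀ b, IsPrefixFree (F b) ∧ IsPrefixComplete (F b) := by
  simp only [isMaximalPrefixCodeBA_iff, forall_and]
  refine and_congr ⟨fun h b p hp q hq hpq => ?_, fun h => ?_⟩ ⟨fun h b v => ?_, fun h b v => ?_⟩
  · exact congrArg Prod.snd (h (b, p) (mem_ofFibers.2 hp) (b, q) (mem_ofFibers.2 hq) rfl hpq)
  · rintro ⟨b, p⟩ hp ⟨c, q⟩ hq (rfl : b = c) hpq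
    rw [h b p (mem_ofFibers.1 hp) q (mem_ofFibers.1 hq) hpq]
  · obtain ⟨⟨c, p⟩, hp, rfl : c = b, hcomp⟩ := h b v
    exact ⟨p, mem_ofFibers.1 hp, hcomp⟩
  · obtain ⟨p, hp, hcomp⟩ := h b v
    exact ⟨(b, p), mem_ofFibers.2 hp, rfl, hcomp⟩

end Codes

end PrefixCode

open PrefixCode in
theorem stmt0 {A B : Type*} [Fintype A] [Fintype B] (k s : ℕ)
    (hk : Fintype.card A = k) (hs : Fintype.card B = s) (hk2 : 2 ≤ k) (hs1 : 1 ≤ s) :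
    (∀ P : Finset (B × List A), IsMaximalPrefixCodeBA (↑P : Set (B × List A)) →
      ∃ i : ℕ, P.card = s + (k - 1) * i) ∧
    (∀ i : ℕ, ∃ P : Finset (B × List A), IsMaximalPrefixCodeBA (↑P : Set (B × List A)) ∧
      P.card = s + (k - 1) * i) := by
  subst hk hs
  constructor
  · intro P hP
    rw [← ofFibers_fiber P, isMaximalPrefixCodeBA_ofFibers_iff] at hP
    choose i hi using fun b => exists_card_eq_of_isPrefixComplete (hP b).1 (hP b).2
    refine ⟨∑ b, i b, ?_⟩
    rw [← ofFibers_fiber P, card_ofFibers, sum_congr rfl fun b _ => hi b, sum_one_add_mul]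
  · intro i
    classical
    have : Nonempty A := Fintype.card_pos_iff.1 (by omega)
    obtain ⟨b₀⟩ : Nonempty B := Fintype.card_pos_iff.1 hs1
    obtain ⟨S, hfree, hcomp, hcard⟩ := exists_isPrefixComplete_card_eq (A := A) i
    refine ⟨ofFibers (Function.update (fun _ => {[]}) b₀ S),
      (isMaximalPrefixCodeBA_ofFibers_iff _).2
        (isPrefixFree_and_isPrefixComplete_update hfree hcomp b₀), ?_⟩
    rw [card_ofFibers_update_singleton, hcard]
    omega
end

section
/- In any monoid M, every subgroup of M is contained in a single H-class, and an H-class H of M is a group (under the monoid multiplication) if and only if H contains an idempotent. -/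
/-- Green's R-preorder: x ≤_R y iff x = y·a for some a. -/
def GreenLeR {M : Type*} [Monoid M] (x y : M) : Prop := ∃ a, x = y * a
/-- Green's L-preorder: x ≤_L y iff x = a·y for some a. -/
def GreenLeL {M : Type*} [Monoid M] (x y : M) : Prop := ∃ a, x = a * y
def GreenEqR {M : Type*} [Monoid M] (x y : M) : Prop := GreenLeR x y ∧ GreenLeR y x
def GreenEqL {M : Type*} [Monoid M] (x y : M) : Prop := GreenLeL x y ∧ GreenLeL y x
/-- Green's H-equivalence. -/
def GreenEqH {M : Type*} [Monoid M] (x y : M) : Prop := GreenEqR x y ∧ GreenEqL x y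

/-- A subgroup of a monoid M: a nonempty subset closed under multiplication, containing
an identity element (for the subset) relative to which every element has an inverse. -/
def IsSubgroupSet {M : Type*} [Monoid M] (S : Set M) : Prop :=
  S.Nonempty ∧ (∀ a ∈ S, ∀ b ∈ S, a * b ∈ S) ∧
  ∃ e ∈ S, (∀ s ∈ S, e * s = s ∧ s * e = s) ∧ ∀ s ∈ S, ∃ t ∈ S, s * t = e ∧ t * s = e

lemma GreenEqH.refl {M : Type*} [Monoid M] (x : M) : GreenEqH x x :=
  ⟨⟨⟨1, (mul_one x).symm⟩, ⟨1, (mul_one x).symm⟩⟩,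
   ⟨⟨1, (one_mul x).symm⟩, ⟨1, (one_mul x).symm⟩⟩⟩

lemma GreenEqH.symm {M : Type*} [Monoid M] {x y : M} (h : GreenEqH x y) : GreenEqH y x :=
  ⟨⟨h.1.2, h.1.1⟩, ⟨h.2.2, h.2.1⟩⟩

lemma GreenEqH.trans {M : Type*} [Monoid M] {x y z : M} (h₁ : GreenEqH x y)
    (h₂ : GreenEqH y z) : GreenEqH x z := by
  obtain ⟨⟨⟨a, ha⟩, ⟨b, hb⟩⟩, ⟨⟨c, hc⟩, ⟨d, hd⟩⟩⟩ := h₁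
  obtain ⟨⟨⟨a', ha'⟩, ⟨b', hb'⟩⟩, ⟨⟨c', hc'⟩, ⟨d', hd'⟩⟩⟩ := h₂
  exact ⟨⟨⟨a' * a, by rw [ha, ha', mul_assoc]⟩, ⟨b * b', by rw [hb', hb, mul_assoc]⟩⟩,
    ⟨⟨c * c', by rw [ha] at *; rw [hc, hc', mul_assoc]⟩,
     ⟨d' * d, by rw [hd', hd, mul_assoc]⟩⟩⟩

/-- an idempotent acts as a two-sided identity on its H-class -/
lemma green_ident {M : Type*} [Monoid M] {e a : M} (he : e * e = e)
    (h : GreenEqH a e) : e * a = a ∧ a * e = a := by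
  obtain ⟨⟨⟨u, hu⟩, -⟩, ⟨v, hv⟩, -⟩ := h
  constructor
  · rw [hu, ← mul_assoc, he]
  · rw [hv, mul_assoc, he]

/-- every element of the H-class of an idempotent has an inverse in that H-class -/
lemma green_inv {M : Type*} [Monoid M] {e a : M} (he : e * e = e)
    (h : GreenEqH a e) : ∃ b, GreenEqH b e ∧ a * b = e ∧ b * a = e := by
  obtain ⟨hea, hae⟩ := green_ident he h
  obtain ⟨⟨-, ⟨s, hs⟩⟩, -, ⟨t, ht⟩⟩ := h
  have hab : a * (e * s * e) = e := by
    rw [← mul_assoc, ← mul_assoc, hae, ← hs, he]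
  have hca : (e * t * e) * a = e := by
    rw [mul_assoc, hea, mul_assoc, ← ht, he]
  have heq : e * t * e = e * s * e := by
    calc e * t * e = (e * t * e) * (a * (e * s * e)) := by rw [hab, mul_assoc (e * t) e e, he]
      _ = ((e * t * e) * a) * (e * s * e) := by rw [← mul_assoc]
      _ = e * (e * s * e) := by rw [hca]
      _ = e * s * e := by rw [← mul_assoc, ← mul_assoc, he]
  have hba : (e * s * e) * a = e := by rw [← heq]; exact hca
  exact ⟨e * s * e,
    ⟨⟨⟨s * e, by rw [mul_assoc]⟩, ⟨a, hba.symm⟩⟩, ⟨e * s, rfl⟩, ⟨a, hab.symm⟩⟩,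
    hab, hba⟩

/-- the H-class of an idempotent is closed under multiplication -/
lemma green_mul {M : Type*} [Monoid M] {e a b : M} (he : e * e = e)
    (ha : GreenEqH a e) (hb : GreenEqH b e) : GreenEqH (a * b) e := by
  obtain ⟨a', -, haa', ha'a⟩ := green_inv he ha
  obtain ⟨b', -, hbb', hb'b⟩ := green_inv he hb
  obtain ⟨hea, hae⟩ := green_ident he ha
  obtain ⟨heb, hbe⟩ := green_ident he hb
  refine ⟨⟨⟨a * b, by rw [← mul_assoc, hea]⟩, ⟨b' * a', ?_⟩⟩,
          ⟨⟨a * b, by rw [mul_assoc, hbe]⟩, ⟨b' * a', ?_⟩⟩⟩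
  · have : a * b * (b' * a') = e := by
      rw [mul_assoc a b, ← mul_assoc b, hbb', ← mul_assoc, hae, haa']
    rw [this]
  · have : b' * a' * (a * b) = e := by
      rw [mul_assoc b' a', ← mul_assoc a', ha'a, heb, hb'b]
    rw [this]

theorem stmt2 {M : Type*} [Monoid M] :
    (∀ S : Set M, IsSubgroupSet S → ∀ a ∈ S, ∀ b ∈ S, GreenEqH a b) ∧
    (∀ x : M, IsSubgroupSet {y : M | GreenEqH y x} ↔ ∃ e : M, GreenEqH e x ∧ e * e = e) := by
  constructor
  · rintro S ⟨-, -, e, heS, hid, hinv⟩ a haS b hbS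
    obtain ⟨a', ha'S, haa', ha'a⟩ := hinv a haS
    obtain ⟨b', hb'S, hbb', hb'b⟩ := hinv b hbS
    have hea := (hid a haS).1
    have hae := (hid a haS).2
    have heb := (hid b hbS).1
    have hbe := (hid b hbS).2
    exact ⟨⟨⟨b' * a, by rw [← mul_assoc, hbb', hea]⟩,
            ⟨a' * b, by rw [← mul_assoc, haa', heb]⟩⟩,
           ⟨⟨a * b', by rw [mul_assoc, hb'b, hae]⟩,
            ⟨b * a', by rw [mul_assoc, ha'a, hbe]⟩⟩⟩
  · intro x
    constructor
    · rintro ⟨-, -, e, heS, hid, -⟩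
      exact ⟨e, heS, (hid e heS).1⟩
    · rintro ⟨e, hex, he⟩
      have key : ∀ y : M, y ∈ {y : M | GreenEqH y x} ↔ GreenEqH y e := by
        intro y
        exact ⟨fun h => h.trans hex.symm, fun h => h.trans hex⟩
      refine ⟨⟨e, hex⟩, ?_, e, hex, ?_, ?_⟩
      · intro a haS b hbS
        exact (key _).2 (green_mul he ((key _).1 haS) ((key _).1 hbS))
      · intro s hsS
        have := green_ident he ((key _).1 hsS)
        exact ⟨this.1, this.2⟩
      · intro s hsS
        obtain ⟨t, hte, hst, hts⟩ := green_inv he ((key _).1 hsS)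
        exact ⟨t, (key _).2 hte, hst, hts⟩
end

section
/- Let M be a monoid and D a D-class of M. Then any two maximal subgroups (group H-classes) contained in D are isomorphic as groups. -/
/-- Green's D-equivalence: x ≡_D y iff x ≡_R s ≡_L y for some s. -/
def GreenEqD {M : Type*} [Monoid M] (x y : M) : Prop := ∃ s, GreenEqR x s ∧ GreenEqL s y

private lemma green_leftid {M : Type*} [Monoid M] {E x : M} (hE : E * E = E)
    (hx : GreenEqH x E) : E * x = x := by
  obtain ⟨u, hu⟩ := hx.1.1
  rw [hu, ← mul_assoc, hE]

private lemma green_rightid {M : Type*} [Monoid M] {E x : M} (hE : E * E = E)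
    (hx : GreenEqH x E) : x * E = x := by
  obtain ⟨v, hv⟩ := hx.2.1
  rw [hv, mul_assoc, hE]

/-- Key auxiliary lemma: given idempotents `E, F` and translating elements `A, B` with
`A*B = E`, `B*A = F`, `E*A = A`, `B` a right multiple of `F` and `A` a left multiple of
`F`, the map `x ↦ B*x*A` sends the H-class of `E` into that of `F`, and `A*(B*x*A)*B = x`
on that H-class. -/
private lemma green_aux {M : Type*} [Monoid M] (E F A B : M) (hE : E * E = E)
    (hAB : A * B = E) (hBA : B * A = F) (hEA : E * A = A)
    (hBF : ∃ β, B = F * β) (hAF : ∃ α, A = α * F) :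
    ∀ x, GreenEqH x E → GreenEqH (B * x * A) F ∧ A * (B * x * A) * B = x := by
  intro x hx
  obtain ⟨⟨⟨u, hu⟩, ⟨c, hc⟩⟩, ⟨⟨v, hv⟩, ⟨d, hd⟩⟩⟩ := hx
  have hEx : E * x = x := green_leftid hE ⟨⟨⟨u, hu⟩, ⟨c, hc⟩⟩, ⟨⟨v, hv⟩, ⟨d, hd⟩⟩⟩
  have hxE : x * E = x := green_rightid hE ⟨⟨⟨u, hu⟩, ⟨c, hc⟩⟩, ⟨⟨v, hv⟩, ⟨d, hd⟩⟩⟩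
  have K1 : ∀ z, A * (B * z) = E * z := fun z => by rw [← mul_assoc, hAB]
  have hEx' : ∀ z, E * (x * z) = x * z := fun z => by rw [← mul_assoc, hEx]
  have hxE' : ∀ z, x * (E * z) = x * z := fun z => by rw [← mul_assoc, hxE]
  have hc' : ∀ z, x * (c * z) = E * z := fun z => by rw [← mul_assoc, ← hc]
  have hd' : ∀ z, d * (x * z) = E * z := fun z => by rw [← mul_assoc, ← hd]
  refine ⟨⟨⟨?_, ?_⟩, ⟨?_, ?_⟩⟩, ?_⟩
  · -- B*x*A ≤_R F
    obtain ⟨β, hβ⟩ := hBF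
    exact ⟨β * (x * A), by rw [hβ]; simp [mul_assoc]⟩
  · -- F ≤_R B*x*A
    refine ⟨B * c * A, ?_⟩
    have : B * x * A * (B * c * A) = F := by
      simp only [mul_assoc, K1, hxE', hc', hEA, hBA]
    rw [this]
  · -- B*x*A ≤_L F
    obtain ⟨α, hα⟩ := hAF
    exact ⟨B * x * α, by rw [hα]; simp [mul_assoc]⟩
  · -- F ≤_L B*x*A
    refine ⟨B * d * A, ?_⟩
    have : B * d * A * (B * x * A) = F := by
      simp only [mul_assoc, K1, hEx', hd', hEA, hBA]
    rw [this]
  · -- A*(B*x*A)*B = x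
    simp only [mul_assoc, hAB, hxE', hxE]
    rw [← mul_assoc, hAB, hEx]

/-- Any two maximal subgroups (H-classes of idempotents) lying in the same D-class
are isomorphic as groups: there is a multiplication-preserving bijection between them. -/
theorem stmt17 {M : Type*} [Monoid M] (e f : M) (he : e * e = e) (hf : f * f = f)
    (hD : GreenEqD e f) :
    ∃ g : M → M, Set.BijOn g {y : M | GreenEqH y e} {y : M | GreenEqH y f} ∧
      ∀ a ∈ {y : M | GreenEqH y e}, ∀ b ∈ {y : M | GreenEqH y e},
        g (a * b) = g a * g b := by
  obtain ⟨s, ⟨⟨q0, hq0⟩, ⟨p, hp⟩⟩, ⟨⟨r, hr⟩, ⟨t, ht⟩⟩⟩ := hD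
  -- hq0 : e = s * q0, hp : s = e * p, hr : s = r * f, ht : f = t * s
  have hes : e * s = s := by rw [hp, ← mul_assoc, he]
  have hsf : s * f = s := by rw [hr, mul_assoc, hf]
  set q := q0 * e with hqdef
  have hsq : s * q = e := by rw [hqdef, ← mul_assoc, ← hq0, he]
  have hfqs : f * q * s = f := by
    calc f * q * s = t * (s * q) * s := by rw [ht]; simp [mul_assoc]
      _ = t * (e * s) := by rw [hsq, mul_assoc]
      _ = f := by rw [hes, ← ht]
  have hsfq : s * (f * q) = e := by rw [← mul_assoc, hsf, hsq]
  have aux1 := green_aux e f s (f * q) he hsfq hfqs hes ⟨q, rfl⟩ ⟨r, hr⟩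
  have aux2 := green_aux f e (f * q) s hf hfqs hsfq
      (by rw [← mul_assoc, hf]) ⟨p, hp⟩ ⟨f * q0, by rw [hqdef, mul_assoc]⟩
  refine ⟨fun x => f * q * x * s, ?_, ?_⟩
  · have hinv : Set.InvOn (fun y => s * y * (f * q)) (fun x => f * q * x * s)
        {y : M | GreenEqH y e} {y : M | GreenEqH y f} := by
      constructor
      · intro x hx
        exact (aux1 x hx).2
      · intro y hy
        exact (aux2 y hy).2
    exact hinv.bijOn (fun x hx => (aux1 x hx).1) (fun y hy => (aux2 y hy).1)
  · intro a ha b hb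
    have heb : ∀ z, e * (b * z) = b * z := fun z => by
      rw [← mul_assoc, green_leftid he hb]
    have hL5 : ∀ z, s * (f * (q * z)) = e * z := fun z => by
      rw [← mul_assoc, ← mul_assoc, mul_assoc s f q, hsfq]
    simp only [mul_assoc, hL5, heb]
end
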